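/- arXiv:2103.09657 — 3 statements merged into one kernel-verified Lean document; each statement's English description precedes it below -/
import Mathlib

section
/- Let V be a 2N-dimensional real vector space with a linear map J : V → V satisfying J² = -id, a symplectic form (nondegenerate antisymmetric bilinear form) Ω⁻¹ on V, and an inner product G⁻¹ on V, related by G⁻¹(v, Jw) = -Ω⁻¹(v, w) for all v, w. Let A ⊆ V be a subspace, let B_b = {v ∈ V : Ω⁻¹(v, u) = 0 for all u ∈ A} be its symplectic complement and B_f = {v ∈ V : G⁻¹(v, u) = 0 for all u ∈ A} its orthogonal complement. Assume V = A ⊕ B_b and V = A ⊕ B_f, with projections P_b : V → A (along B_b) and P_f : V → A (along B_f). Define the restricted complex structures J_A^b = P_b ∘ J restricted to A and J_A^f = P_f ∘ J restricted to A. Then J_A^f ∘ J_A^b = -id_A; in particular J_A^b is invertible and J_A^f = -(J_A^b)⁻¹. -/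
/-- Entanglement duality at the level of restricted complex structures.
If `J` is a linear complex structure on a `2N`-dimensional real vector space `V`,
compatible with a nondegenerate antisymmetric form `Ω` and a positive-definite symmetric
form `G` via `G v (J w) = -Ω v w`, and `A` is a subspace with symplectic complement `Bb`
and orthogonal complement `Bf` (both complementary to `A`), then the two restrictions of
`J` to `A` (via the respective projections) satisfy `J_A^f ∘ J_A^b = -id_A`; in particular
`J_A^b` is invertible and `J_A^f = -(J_A^b)⁻¹`. -/
theorem stmt0
    (N : ℕ) (V : Type*) [AddCommGroup V] [Module ℝ V] [FiniteDimensional ℝ V]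
    (hdim : Module.finrank ℝ V = 2 * N)
    (J : V →ₗ[ℝ] V) (hJ : J ∘ₗ J = -LinearMap.id)
    (Ω : V →ₗ[ℝ] V →ₗ[ℝ] ℝ) (G : V →ₗ[ℝ] V →ₗ[ℝ] ℝ)
    (hΩanti : ∀ v w, Ω v w = -Ω w v)
    (hΩnondeg : ∀ v, (∀ w, Ω v w = 0) → v = 0)
    (hGsymm : ∀ v w, G v w = G w v)
    (hGpos : ∀ v, v ≠ 0 → 0 < G v v)
    (hcompat : ∀ v w, G v (J w) = -Ω v w)
    (A Bb Bf : Submodule ℝ V)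
    (hBb : ∀ v, v ∈ Bb ↔ ∀ u ∈ A, Ω v u = 0)
    (hBf : ∀ v, v ∈ Bf ↔ ∀ u ∈ A, G v u = 0)
    (hb : IsCompl A Bb) (hf : IsCompl A Bf) :
    let Pb : V →ₗ[ℝ] A := A.linearProjOfIsCompl Bb hb
    let Pf : V →ₗ[ℝ] A := A.linearProjOfIsCompl Bf hf
    let JAb : A →ₗ[ℝ] A := Pb ∘ₗ J ∘ₗ A.subtype
    let JAf : A →ₗ[ℝ] A := Pf ∘ₗ J ∘ₗ A.subtype
    JAf ∘ₗ JAb = -LinearMap.id ∧ JAb ∘ₗ JAf = -LinearMap.id ∧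
      Function.Bijective JAb := by
  intro Pb Pf JAb JAf
  have hJJ : ∀ v, J (J v) = -v := fun v => by
    have := congrArg (fun f : V →ₗ[ℝ] V => f v) hJ
    simpa using this
  have hGJ : ∀ v w, G (J v) (J w) = G v w := by
    intro v w
    have h1 : G (J v) (J w) = -Ω (J v) w := hcompat _ _
    have h3 : G w (J (J v)) = -Ω w (J v) := hcompat _ _
    rw [hJJ, map_neg] at h3
    have h2 : Ω (J v) w = -Ω w (J v) := hΩanti _ _
    rw [hGsymm v w]
    linarith
  have hmemBf : ∀ x ∈ Bb, J x ∈ Bf := by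
    intro x hx
    rw [hBf]
    intro u hu
    have h1 : G u (J x) = -Ω u x := hcompat u x
    have h2 : Ω x u = 0 := (hBb x).mp hx u hu
    have h3 : Ω u x = -Ω x u := hΩanti _ _
    rw [hGsymm]
    rw [h1, h3, h2]; ring
  have hmemBb : ∀ x ∈ Bf, J x ∈ Bb := by
    intro x hx
    rw [hBb]
    intro u hu
    have h1 : G (J x) (J u) = -Ω (J x) u := hcompat _ _
    have h2 : G (J x) (J u) = G x u := hGJ _ _
    have h3 : G x u = 0 := (hBf x).mp hx u hu
    linarith
  have key : ∀ (B B' : Submodule ℝ V) (h : IsCompl A B) (h' : IsCompl A B')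
      (hmem : ∀ x ∈ B, J x ∈ B') (a : A),
      (A.linearProjOfIsCompl B' h') (J ((A.linearProjOfIsCompl B h) (J a) : V)) = -a := by
    intro B B' h h' hmem a
    set P := A.linearProjOfIsCompl B h
    set P' := A.linearProjOfIsCompl B' h'
    have hbmem : (J (a : V)) - (P (J (a : V)) : V) ∈ B := by
      rw [← Submodule.linearProjOfIsCompl_apply_eq_zero_iff h]
      rw [map_sub]; exact sub_eq_zero.mpr (Submodule.projectionOnto_apply_left h (P (J (a : V)))).symm
    have hdecomp : J ((P (J (a : V)) : V)) = -(a : V) - J ((J (a : V)) - (P (J (a : V)) : V)) := by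
      rw [map_sub, hJJ]
      abel
    rw [hdecomp, map_sub]
    have h0 : P' (J ((J (a : V)) - (P (J (a : V)) : V))) = 0 :=
      Submodule.projectionOnto_apply_of_mem_right h' (hmem _ hbmem)
    rw [h0]
    have : P' (-(a : V)) = -a := by
      rw [map_neg]; exact congrArg Neg.neg (Submodule.projectionOnto_apply_left h' a)
    rw [this]; abel
  have c1 : JAf ∘ₗ JAb = -LinearMap.id := by
    apply LinearMap.ext
    intro a
    simpa [JAf, JAb, Pb, Pf] using key Bb Bf hb hf hmemBf a
  have c2 : JAb ∘ₗ JAf = -LinearMap.id := by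
    apply LinearMap.ext
    intro a
    simpa [JAf, JAb, Pb, Pf] using key Bf Bb hf hb hmemBb a
  refine ⟨c1, c2, ?_, ?_⟩
  · intro x y hxy
    have hx := congrArg (fun f : A →ₗ[ℝ] A => f x) c1
    have hy := congrArg (fun f : A →ₗ[ℝ] A => f y) c1
    simp only [LinearMap.comp_apply, LinearMap.neg_apply, LinearMap.id_apply] at hx hy
    rw [hxy] at hx
    have := hx.symm.trans hy
    exact neg_injective this
  · intro y
    refine ⟨JAf (-y), ?_⟩
    have := congrArg (fun f : A →ₗ[ℝ] A => f (-y)) c2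
    simp only [LinearMap.comp_apply, LinearMap.neg_apply, LinearMap.id_apply] at this
    rw [this]; simp
end

section
/- Let T₁ : V_b → V_f and T₂ : V_f → V_b be linear maps between 2N-dimensional real vector spaces such that K_b := T₂T₁ and K_f := T₁T₂ are both invertible and diagonalizable over ℂ with purely imaginary eigenvalues. Define L₁ = |K_f⁻¹|^{1/2} T₁ and L₂ = |K_b⁻¹|^{1/2} T₂, where |M| denotes the functional-calculus absolute value (applying λ ↦ |λ| to the eigenvalues). Then L₁ = T₁ |K_b⁻¹|^{1/2}, L₂ = T₂ |K_f⁻¹|^{1/2}, and consequently L₁L₂ = |K_f⁻¹| K_f and L₂L₁ = |K_b⁻¹| K_b. -/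
open Matrix Classical

/-- Functional calculus on a diagonalizable complex matrix: pick a diagonalization
`M = U⁻¹ D U` and apply `f` to the diagonal entries (the eigenvalues). If `M` is not
diagonalizable, return `0`. (For diagonalizable `M` the value is independent of the
chosen diagonalization.) -/
noncomputable def matFun {m : Type*} [Fintype m] [DecidableEq m]
    (f : ℂ → ℂ) (M : Matrix m m ℂ) : Matrix m m ℂ :=
  if hd : ∃ p : Matrix m m ℂ × Matrix m m ℂ,
      IsUnit p.1 ∧ p.2.IsDiag ∧ M = p.1⁻¹ * p.2 * p.1 then
    (hd.choose.1)⁻¹ * (Matrix.diagonal fun i => f (hd.choose.2 i i)) * hd.choose.1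
  else 0

/-!
On a diagonalizable matrix, `matFun f` is evaluation at any polynomial interpolating `f` on the
spectrum, so it respects intertwiners: `A X = Y A` implies `A f(X) = f(Y) A`. Applied to
`T₁ (T₂T₁)⁻¹ = (T₁T₂)⁻¹ T₁` with `f = √|·|` this gives the two formulas for `L₁`, `L₂`; the
product formulas follow since `matFun` is multiplicative in `f` and `√|z| · √|z| = |z|`.
-/

open Polynomial

theorem SemiconjBy.aeval {R A : Type*} [CommSemiring R] [Semiring A] [Algebra R A]
    {a x y : A} (h : SemiconjBy a x y) (p : R[X]) :
    SemiconjBy a (aeval x p) (aeval y p) := by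
  induction p using Polynomial.induction_on' with
  | add p q hp hq => simpa only [map_add] using hp.add_right hq
  | monomial k r =>
    simpa only [aeval_monomial] using
      SemiconjBy.mul_right (Algebra.commute_algebraMap_right r a) (h.pow_right k)

theorem Polynomial.exists_eval_eq_on_finite {F : Type*} [Field F] {s : Set F}
    (hs : s.Finite) (f : F → F) : ∃ p : F[X], ∀ x ∈ s, p.eval x = f x :=
  ⟨Lagrange.interpolate hs.toFinset id f, fun _ hx =>
    Lagrange.eval_interpolate_at_node f (Set.injOn_id _) (hs.mem_toFinset.mpr hx)⟩

namespace Matrix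

variable {n : Type*} [Fintype n] [DecidableEq n]

theorem aeval_diagonal {R : Type*} [CommSemiring R] (d : n → R) (p : R[X]) :
    aeval (diagonal d) p = diagonal fun i => p.eval (d i) := by
  rw [← diagonalAlgHom_apply (R := R), aeval_algHom_apply, aeval_pi_apply]
  simp

theorem mul_inv_mul_swap {R : Type*} [CommRing R] (A B : Matrix n n R) :
    A * (B * A)⁻¹ = (A * B)⁻¹ * A := by
  -- `A * B` and `B * A` have the same determinant; if it is not a unit, both inverses are `0`.
  by_cases h : IsUnit (A * B).det
  · have h' : IsUnit (B * A).det := by rwa [det_mul, mul_comm, ← det_mul]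
    calc A * (B * A)⁻¹ = (A * B)⁻¹ * (A * B) * A * (B * A)⁻¹ := by
          rw [nonsing_inv_mul _ h, one_mul]
      _ = (A * B)⁻¹ * A * ((B * A) * (B * A)⁻¹) := by simp only [mul_assoc]
      _ = (A * B)⁻¹ * A := by rw [mul_nonsing_inv _ h', mul_one]
  · have h' : ¬IsUnit (B * A).det := by rwa [det_mul, mul_comm, ← det_mul]
    rw [nonsing_inv_apply_not_isUnit _ h, nonsing_inv_apply_not_isUnit _ h', mul_zero, zero_mul]

def IsDiagonalizable {R : Type*} [CommRing R] (M : Matrix n n R) : Prop :=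
  ∃ p : Matrix n n R × Matrix n n R, IsUnit p.1 ∧ p.2.IsDiag ∧ M = p.1⁻¹ * p.2 * p.1

theorem IsDiagonalizable.inv {R : Type*} [CommRing R] {M : Matrix n n R}
    (hM : M.IsDiagonalizable) : M⁻¹.IsDiagonalizable := by
  obtain ⟨⟨U, D⟩, hU, hD : D.IsDiag, rfl⟩ := hM
  refine ⟨⟨U, D⁻¹⟩, hU, ?_, ?_⟩
  · change D⁻¹.IsDiag
    rw [← hD.diagonal_diag, inv_diagonal]
    exact isDiag_diagonal _
  · simp only [mul_inv_rev, nonsing_inv_nonsing_inv U ((isUnit_iff_isUnit_det U).mp hU), mul_assoc]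

theorem IsDiagonalizable.exists_matFun_eq {M : Matrix n n ℂ} (hM : M.IsDiagonalizable) :
    ∃ (U : Matrix n n ℂ) (d : n → ℂ), IsUnit U ∧ M = U⁻¹ * diagonal d * U ∧
      ∀ f : ℂ → ℂ, matFun f M = U⁻¹ * diagonal (fun i => f (d i)) * U := by
  have hM' : ∃ p : Matrix n n ℂ × Matrix n n ℂ,
      IsUnit p.1 ∧ p.2.IsDiag ∧ M = p.1⁻¹ * p.2 * p.1 := hM
  obtain ⟨hU, hD, hMUD⟩ := hM'.choose_spec
  exact ⟨_, _, hU, hD.diagonal_diag.symm ▸ hMUD, fun f => dif_pos hM'⟩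

theorem matFun_eq_aeval {f : ℂ → ℂ} {M : Matrix n n ℂ} (hM : M.IsDiagonalizable) {p : ℂ[X]}
    (hp : ∀ μ ∈ spectrum ℂ M, p.eval μ = f μ) : matFun f M = aeval M p := by
  obtain ⟨U, d, hU, hMUD, hfM⟩ := hM.exists_matFun_eq
  have hUd : IsUnit U.det := (isUnit_iff_isUnit_det U).mp hU
  have hUM : SemiconjBy U M (diagonal d) := by
    rw [SemiconjBy, hMUD, ← mul_assoc, ← mul_assoc, mul_nonsing_inv _ hUd, one_mul]
  have hspec : spectrum ℂ M = Set.range d := by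
    rw [hMUD, ← hU.unit_spec, ← coe_units_inv, spectrum.units_conjugate', spectrum_diagonal]
  have hpd : aeval (diagonal d) p = diagonal fun i => f (d i) := by
    rw [aeval_diagonal]
    exact congrArg diagonal (funext fun i => hp _ (hspec ▸ ⟨i, rfl⟩))
  rw [hfM, ← hpd, mul_assoc, ← (hUM.aeval p).eq, ← mul_assoc, nonsing_inv_mul _ hUd, one_mul]

theorem matFun_mul_matFun (f g : ℂ → ℂ) {M : Matrix n n ℂ} (hM : M.IsDiagonalizable) :
    matFun f M * matFun g M = matFun (f * g) M := by
  obtain ⟨U, d, hU, -, hfM⟩ := hM.exists_matFun_eq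
  rw [hfM, hfM, hfM]
  calc U⁻¹ * diagonal (fun i => f (d i)) * U * (U⁻¹ * diagonal (fun i => g (d i)) * U)
      = U⁻¹ * (diagonal (fun i => f (d i)) * (U * U⁻¹) * diagonal (fun i => g (d i))) * U := by
        simp only [mul_assoc]
    _ = U⁻¹ * diagonal (fun i => (f * g) (d i)) * U := by
        rw [mul_nonsing_inv _ ((isUnit_iff_isUnit_det U).mp hU), mul_one, diagonal_mul_diagonal]
        rfl

end Matrix

theorem SemiconjBy.matFun {n : Type*} [Fintype n] [DecidableEq n] {A X Y : Matrix n n ℂ}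
    (h : SemiconjBy A X Y) (hX : X.IsDiagonalizable) (hY : Y.IsDiagonalizable) (f : ℂ → ℂ) :
    SemiconjBy A (matFun f X) (matFun f Y) := by
  obtain ⟨p, hp⟩ := Polynomial.exists_eval_eq_on_finite
    ((finite_spectrum X).union (finite_spectrum Y)) f
  rw [matFun_eq_aeval hX fun μ hμ => hp μ (.inl hμ), matFun_eq_aeval hY fun μ hμ => hp μ (.inr hμ)]
  exact h.aeval p

theorem stmt4_general (N : ℕ) (T₁ T₂ : Matrix (Fin (2 * N)) (Fin (2 * N)) ℝ)
    (hdb : ∃ p : Matrix (Fin (2 * N)) (Fin (2 * N)) ℂ × Matrix (Fin (2 * N)) (Fin (2 * N)) ℂ,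
      IsUnit p.1 ∧ p.2.IsDiag ∧ (T₂ * T₁).map Complex.ofReal = p.1⁻¹ * p.2 * p.1)
    (hdf : ∃ p : Matrix (Fin (2 * N)) (Fin (2 * N)) ℂ × Matrix (Fin (2 * N)) (Fin (2 * N)) ℂ,
      IsUnit p.1 ∧ p.2.IsDiag ∧ (T₁ * T₂).map Complex.ofReal = p.1⁻¹ * p.2 * p.1) :
    let Kb := (T₂ * T₁).map Complex.ofReal
    let Kf := (T₁ * T₂).map Complex.ofReal
    let T1c := T₁.map Complex.ofReal
    let T2c := T₂.map Complex.ofReal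
    let sqAbs : ℂ → ℂ := fun z => (Real.sqrt ‖z‖ : ℂ)
    let cAbs : ℂ → ℂ := fun z => (‖z‖ : ℂ)
    let L₁ := matFun sqAbs (Kf⁻¹) * T1c
    let L₂ := matFun sqAbs (Kb⁻¹) * T2c
    L₁ = T1c * matFun sqAbs (Kb⁻¹) ∧
    L₂ = T2c * matFun sqAbs (Kf⁻¹) ∧
    L₁ * L₂ = matFun cAbs (Kf⁻¹) * Kf ∧
    L₂ * L₁ = matFun cAbs (Kb⁻¹) * Kb := by
  intro Kb Kf T1c T2c sqAbs cAbs L₁ L₂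
  have hKb : Kb = T2c * T1c := Matrix.map_mul (f := Complex.ofRealHom)
  have hKf : Kf = T1c * T2c := Matrix.map_mul (f := Complex.ofRealHom)
  have hdb' : Kb⁻¹.IsDiagonalizable := IsDiagonalizable.inv hdb
  have hdf' : Kf⁻¹.IsDiagonalizable := IsDiagonalizable.inv hdf
  have hsq : sqAbs * sqAbs = cAbs := funext fun z => by
    simp only [Pi.mul_apply, sqAbs, cAbs, ← Complex.ofReal_mul, Real.mul_self_sqrt (norm_nonneg z)]
  have hL₁ : L₁ = T1c * matFun sqAbs Kb⁻¹ :=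
    (SemiconjBy.matFun (by rw [SemiconjBy, hKb, hKf, mul_inv_mul_swap]) hdb' hdf' sqAbs).symm
  have hL₂ : L₂ = T2c * matFun sqAbs Kf⁻¹ :=
    (SemiconjBy.matFun (by rw [SemiconjBy, hKb, hKf, mul_inv_mul_swap]) hdf' hdb' sqAbs).symm
  refine ⟨hL₁, hL₂, ?_, ?_⟩
  · calc L₁ * L₂ = matFun sqAbs Kf⁻¹ * (T1c * matFun sqAbs Kb⁻¹) * T2c := by
          simp only [L₁, L₂, mul_assoc]
      _ = matFun sqAbs Kf⁻¹ * matFun sqAbs Kf⁻¹ * (T1c * T2c) := by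
          rw [← hL₁]
          simp only [L₁, mul_assoc]
      _ = matFun cAbs Kf⁻¹ * Kf := by rw [matFun_mul_matFun _ _ hdf', hsq, ← hKf]
  · calc L₂ * L₁ = matFun sqAbs Kb⁻¹ * (T2c * matFun sqAbs Kf⁻¹) * T1c := by
          simp only [L₁, L₂, mul_assoc]
      _ = matFun sqAbs Kb⁻¹ * matFun sqAbs Kb⁻¹ * (T2c * T1c) := by
          rw [← hL₂]
          simp only [L₂, mul_assoc]
      _ = matFun cAbs Kb⁻¹ * Kb := by rw [matFun_mul_matFun _ _ hdb', hsq, ← hKb]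

/-- For `K_b = T₂T₁`, `K_f = T₁T₂` invertible and diagonalizable over `ℂ`
with purely imaginary eigenvalues, the normalized identification maps
`L₁ = |K_f⁻¹|^{1/2} T₁` and `L₂ = |K_b⁻¹|^{1/2} T₂` satisfy
`L₁ = T₁ |K_b⁻¹|^{1/2}`, `L₂ = T₂ |K_f⁻¹|^{1/2}`, and hence
`L₁L₂ = |K_f⁻¹| K_f` and `L₂L₁ = |K_b⁻¹| K_b`. -/
theorem stmt4 (N : ℕ) (T₁ T₂ : Matrix (Fin (2 * N)) (Fin (2 * N)) ℝ)
    (hKbinv : IsUnit (T₂ * T₁)) (hKfinv : IsUnit (T₁ * T₂))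
    (hdb : ∃ p : Matrix (Fin (2 * N)) (Fin (2 * N)) ℂ × Matrix (Fin (2 * N)) (Fin (2 * N)) ℂ,
      IsUnit p.1 ∧ p.2.IsDiag ∧ (T₂ * T₁).map Complex.ofReal = p.1⁻¹ * p.2 * p.1)
    (hdf : ∃ p : Matrix (Fin (2 * N)) (Fin (2 * N)) ℂ × Matrix (Fin (2 * N)) (Fin (2 * N)) ℂ,
      IsUnit p.1 ∧ p.2.IsDiag ∧ (T₁ * T₂).map Complex.ofReal = p.1⁻¹ * p.2 * p.1)
    (hspecb : ∀ (μ : ℂ) (v : Fin (2 * N) → ℂ), v ≠ 0 →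
      ((T₂ * T₁).map Complex.ofReal) *ᵥ v = μ • v → μ.re = 0)
    (hspecf : ∀ (μ : ℂ) (v : Fin (2 * N) → ℂ), v ≠ 0 →
      ((T₁ * T₂).map Complex.ofReal) *ᵥ v = μ • v → μ.re = 0) :
    let Kb := (T₂ * T₁).map Complex.ofReal
    let Kf := (T₁ * T₂).map Complex.ofReal
    let T1c := T₁.map Complex.ofReal
    let T2c := T₂.map Complex.ofReal
    let sqAbs : ℂ → ℂ := fun z => (Real.sqrt ‖z‖ : ℂ)
    let cAbs : ℂ → ℂ := fun z => (‖z‖ : ℂ)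
    let L₁ := matFun sqAbs (Kf⁻¹) * T1c
    let L₂ := matFun sqAbs (Kb⁻¹) * T2c
    L₁ = T1c * matFun sqAbs (Kb⁻¹) ∧
    L₂ = T2c * matFun sqAbs (Kf⁻¹) ∧
    L₁ * L₂ = matFun cAbs (Kf⁻¹) * Kf ∧
    L₂ * L₁ = matFun cAbs (Kb⁻¹) * Kb :=
  stmt4_general N T₁ T₂ hdb hdf
end

section
/- Define s_b : (1, ∞) → ℝ by s_b(x) = ((x+1)/2)·log((x+1)/2) - ((x-1)/2)·log((x-1)/2) and s_f : (0, 1) → ℝ by s_f(x) = -((1+x)/2)·log((1+x)/2) - ((1-x)/2)·log((1-x)/2). Then for all λ ∈ (0, 1), s_b(1/λ) ≥ s_f(λ), and lim_{λ→0⁺} s_f(λ) = log 2 while s_b(1/λ) → ∞ as λ → 0⁺. -/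
open Real Filter

/-- Bosonic single-mode entanglement entropy. -/
noncomputable def sb (x : ℝ) : ℝ :=
  ((x + 1) / 2) * Real.log ((x + 1) / 2) - ((x - 1) / 2) * Real.log ((x - 1) / 2)

/-- Fermionic single-mode entanglement entropy. -/
noncomputable def sf (x : ℝ) : ℝ :=
  -(((1 + x) / 2) * Real.log ((1 + x) / 2)) - ((1 - x) / 2) * Real.log ((1 - x) / 2)

lemma stmt6_main : ∀ l ∈ Set.Ioo (0 : ℝ) 1, sb (1 / l) ≥ sf l := by
  rintro l ⟨hl0, hl1⟩
  have hlne : l ≠ 0 := ne_of_gt hl0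
  have hx : 1 < 1 / l := by rw [lt_div_iff₀ hl0]; linarith
  set a : ℝ := (1 / l + 1) / 2 with ha_def
  set b : ℝ := (1 / l - 1) / 2 with hb_def
  have ha : 0 < a := by rw [ha_def]; linarith
  have hb : 0 < b := by rw [hb_def]; linarith
  have h2a : 1 + l = 2 * (l * a) := by rw [ha_def]; field_simp
  have h2b : 1 - l = 2 * (l * b) := by rw [hb_def]; field_simp
  have hsum' : l * a + l * b = 1 := by rw [ha_def, hb_def]; field_simp; ring
  have hxv : l * a ^ 2 = l * b ^ 2 + 1 := by rw [ha_def, hb_def]; field_simp; ring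
  have hsb : sb (1 / l) = a * Real.log a - b * Real.log b := rfl
  have hp : (1 + l) / 2 = l * a := by linarith
  have hq : (1 - l) / 2 = l * b := by linarith
  have hsf : sf l = -(l * a * (Real.log l + Real.log a)) - l * b * (Real.log l + Real.log b) := by
    rw [sf, hp, hq, Real.log_mul hlne (ne_of_gt ha), Real.log_mul hlne (ne_of_gt hb)]
  -- superadditivity step
  have hba : b ≤ a := by rw [ha_def, hb_def]; linarith
  have h1' : Real.log b ≤ Real.log a := Real.log_le_log hb hba
  have hmul : l * b ^ 2 * (2 * Real.log b) ≤ l * b ^ 2 * (2 * Real.log a) := by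
    apply mul_le_mul_of_nonneg_left (by linarith) (by positivity)
  have h1la : 1 / l ≤ a ^ 2 := by
    rw [div_le_iff₀ hl0]; nlinarith [hxv, sq_nonneg b]
  have h2' : -Real.log l ≤ 2 * Real.log a := by
    have := Real.log_le_log (by positivity) h1la
    rw [one_div, Real.log_inv, Real.log_pow] at this
    push_cast at this; linarith
  have e2 : l * a ^ 2 * Real.log a = l * b ^ 2 * Real.log a + Real.log a := by
    linear_combination Real.log a * hxv
  have key : 0 ≤ 2 * l * a ^ 2 * Real.log a - 2 * l * b ^ 2 * Real.log b + Real.log l := by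
    nlinarith [hmul, h2', e2, mul_pos hl0 ha]
  have hfinal : sb (1 / l) - sf l
      = 2 * l * a ^ 2 * Real.log a - 2 * l * b ^ 2 * Real.log b + Real.log l := by
    rw [hsb, hsf]
    linear_combination (a * Real.log a) * h2a - (b * Real.log b) * h2b + Real.log l * hsum'
  linarith

lemma stmt6_sf : Tendsto sf (nhdsWithin 0 (Set.Ioi 0)) (nhds (Real.log 2)) := by
  have hc : ContinuousAt sf 0 := by
    unfold sf
    have h1 : ContinuousAt (fun x : ℝ => (1 + x) / 2) 0 := by fun_prop
    have h2 : ContinuousAt (fun x : ℝ => (1 - x) / 2) 0 := by fun_prop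
    exact ((h1.mul (h1.log (by norm_num))).neg).sub (h2.mul (h2.log (by norm_num)))
  have h0 : sf 0 = Real.log 2 := by
    unfold sf
    norm_num
    rw [show (1:ℝ)/2 = 2⁻¹ by norm_num, Real.log_inv]
    ring
  have := hc.tendsto
  rw [h0] at this
  exact this.mono_left nhdsWithin_le_nhds

lemma stmt6_sb : Tendsto (fun l => sb (1 / l)) (nhdsWithin 0 (Set.Ioi 0)) atTop := by
  have hlog : Tendsto (fun l : ℝ => Real.log ((1 / l - 1) / 2)) (nhdsWithin 0 (Set.Ioi 0)) atTop := by
    apply Real.tendsto_log_atTop.comp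
    have h1 : Tendsto (fun l : ℝ => 1 / l) (nhdsWithin (0:ℝ) (Set.Ioi 0)) atTop := by
      simpa [one_div] using tendsto_inv_nhdsGT_zero
    have h2 := tendsto_atTop_add_const_right (nhdsWithin (0:ℝ) (Set.Ioi 0)) (-1 : ℝ) h1
    have h3 := Tendsto.atTop_div_const (by norm_num : (0:ℝ) < 2) h2
    simpa [sub_eq_add_neg] using h3
  refine tendsto_atTop_mono' (nhdsWithin (0:ℝ) (Set.Ioi (0:ℝ))) ?_ hlog
  filter_upwards [self_mem_nhdsWithin, Ioo_mem_nhdsGT_of_mem (by norm_num : (0:ℝ) ∈ Set.Ico 0 1)]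
    with l hl hl1
  have hl0 : 0 < l := hl
  have hlt1 : l < 1 := hl1.2
  have hx : 1 < 1 / l := by rw [lt_div_iff₀ hl0]; linarith
  set a : ℝ := (1 / l + 1) / 2 with ha_def
  set b : ℝ := (1 / l - 1) / 2 with hb_def
  have ha : 0 < a := by rw [ha_def]; linarith
  have hb : 0 < b := by rw [hb_def]; linarith
  have hba : b ≤ a := by rw [ha_def, hb_def]; linarith
  have h1' : Real.log b ≤ Real.log a := Real.log_le_log hb hba
  have hsb : sb (1 / l) = a * Real.log a - b * Real.log b := rfl
  have hab1 : a - b = 1 := by rw [ha_def, hb_def]; ring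
  rw [hsb]
  have habl : a * Real.log b - b * Real.log b = Real.log b := by
    linear_combination Real.log b * hab1
  linarith [mul_le_mul_of_nonneg_left h1' ha.le]

/-- For all `λ ∈ (0,1)`, `s_b(1/λ) ≥ s_f(λ)`; moreover `s_f(λ) → log 2`
and `s_b(1/λ) → ∞` as `λ → 0⁺`. -/
theorem stmt6 :
    (∀ l ∈ Set.Ioo (0 : ℝ) 1, sb (1 / l) ≥ sf l) ∧
    Tendsto sf (nhdsWithin 0 (Set.Ioi 0)) (nhds (Real.log 2)) ∧
    Tendsto (fun l => sb (1 / l)) (nhdsWithin 0 (Set.Ioi 0)) atTop :=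
  ⟨stmt6_main, stmt6_sf, stmt6_sb⟩
end
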